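/- The generating function g(x) = ∑_{n≥0} μ_n x^n of μ_n = ∑_{k=0}^n C(n+k,2k)·Cat(k)·α^{n-k} β^k satisfies the quadratic equation βx·g(x)^2 - (1-αx)·g(x) + 1 = 0 as formal power series. -/

import Mathlib

/-!
With `c(t) = ∑ Cat(k) tᵏ`, the identity `∑ₙ C(n+k,2k) α^(n-k) xⁿ = xᵏ / (1 - αx)^(2k+1)` gives
`g(x) = c(T) / (1 - αx)` with `T = βx / (1 - αx)²`. Then `βx g² - (1 - αx) g + 1` equals
`T c(T)² - c(T) + 1`, which vanishes by the Catalan equation `c = t c² + 1` substituted at `t = T`.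
-/

open Finset PowerSeries

namespace PowerSeries

variable {R S : Type*} [CommRing R] [CommRing S] [Algebra R S]

theorem coeff_pow_eq_zero_of_lt {a : S⟦X⟧} (ha : constantCoeff a = 0) {j d : ℕ} (h : j < d) :
    coeff j (a ^ d) = 0 :=
  X_pow_dvd_iff.mp (pow_dvd_pow_of_dvd (X_dvd_iff.mpr ha) d) j h

theorem coeff_subst_eq_sum_range {a : S⟦X⟧} (ha : constantCoeff a = 0) (φ : R⟦X⟧)
    {j N : ℕ} (hj : j < N) :
    coeff j (φ.subst a) = ∑ d ∈ range N, coeff d φ • coeff j (a ^ d) := by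
  rw [coeff_subst' (HasSubst.of_constantCoeff_zero' ha)]
  refine finsum_eq_sum_of_support_subset _ fun d hd => ?_
  by_contra hdN
  simp only [coe_range, Set.mem_Iio, not_lt] at hdN
  exact hd (by simp only [coeff_pow_eq_zero_of_lt ha (hj.trans_le hdN), smul_zero])

theorem coeff_mul_subst {a : S⟦X⟧} (ha : constantCoeff a = 0) (f : S⟦X⟧) (φ : R⟦X⟧) (n : ℕ) :
    coeff n (f * φ.subst a) = ∑ d ∈ range (n + 1), coeff d φ • coeff n (f * a ^ d) := by
  simp only [coeff_mul, smul_sum]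
  rw [sum_comm]
  refine sum_congr rfl fun p hp => ?_
  rw [coeff_subst_eq_sum_range ha φ (Nat.antidiagonal.snd_lt hp), mul_sum]
  simp only [mul_smul_comm]

theorem subst_catalanSeries_sq_mul_add_one {a : S⟦X⟧} (ha : HasSubst a) :
    ((catalanSeries.map (Nat.castRingHom S)).subst a) ^ 2 * a + 1
      = (catalanSeries.map (Nat.castRingHom S)).subst a := by
  simpa only [map_add, map_mul, map_pow, map_one, map_X, substAlgHom_X, coe_substAlgHom] using
    congrArg (fun f => substAlgHom ha (f.map (Nat.castRingHom S))) catalanSeries_sq_mul_X_add_one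

theorem one_sub_C_mul_X_mul_rescale_mk_one (a : S) : (1 - C a * X) * rescale a (mk 1) = 1 := by
  rw [← rescale_X, ← map_one (rescale a), ← map_sub, ← map_mul, mul_comm,
    mk_one_mul_one_sub_eq_one, map_one]

theorem coeff_rescale_mk_one_pow (a : S) (d n : ℕ) :
    coeff n (rescale a (mk 1) ^ (d + 1)) = (d + n).choose d * a ^ n := by
  rw [← map_pow, mk_one_pow_eq_mk_choose_add, coeff_rescale, coeff_mk, mul_comm]

theorem coeff_rescale_mk_one_mul_pow (a b : S) {d n : ℕ} (h : d ≤ n) :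
    coeff n (rescale a (mk 1) * (C b * X * rescale a (mk 1) ^ 2) ^ d)
      = (n + d).choose (2 * d) * a ^ (n - d) * b ^ d := by
  have : rescale a (mk 1) * (C b * X * rescale a (mk 1) ^ 2) ^ d
      = C (b ^ d) * (X ^ d * rescale a (mk 1) ^ (2 * d + 1)) := by
    rw [map_pow]
    ring
  rw [this, coeff_C_mul, coeff_X_pow_mul', if_pos h, coeff_rescale_mk_one_pow,
    show 2 * d + (n - d) = n + d by omega]
  ring

end PowerSeries

/-- The generating function `g` of the moments
`μ_n = ∑_{k=0}^n C(n+k,2k)·Cat(k)·α^{n-k}β^k` satisfies `βx g² - (1-αx) g + 1 = 0`. -/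
theorem moments_gf_quadratic {R : Type*} [CommRing R] (α β : R) :
    let g : PowerSeries R := PowerSeries.mk fun n =>
      ∑ k ∈ Finset.range (n + 1),
        (((n + k).choose (2 * k) * catalan k : ℕ) : R) * α ^ (n - k) * β ^ k
    PowerSeries.C β * PowerSeries.X * g ^ 2
      - (1 - PowerSeries.C α * PowerSeries.X) * g + 1 = 0 := by
  intro g
  set v := rescale α (mk 1)
  set T := C β * X * v ^ 2
  have hT : constantCoeff T = 0 := by simp [T]
  set c : R⟦X⟧ := (catalanSeries.map (Nat.castRingHom R)).subst T
  have hg : g = v * c := by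
    ext n
    rw [coeff_mk, coeff_mul_subst hT]
    refine sum_congr rfl fun d hd => ?_
    rw [coeff_rescale_mk_one_mul_pow α β (Nat.lt_succ_iff.mp (mem_range.mp hd)), coeff_map,
      catalanSeries_coeff]
    push_cast
    ring
  have hc := subst_catalanSeries_sq_mul_add_one (HasSubst.of_constantCoeff_zero' hT)
  rw [hg]
  linear_combination hc - c * one_sub_C_mul_X_mul_rescale_mk_one α
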